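/- Fix σ > 0, σ_J > 0, Γ > 0, p_th > 0 and P > p_th, with P = p_th·(σ_J²·Γ + 1). Define R(p, γ) = log₂(1 + p·σ²/(2·(1 + γ·σ_J²) + (1 + γ·σ_J²)²/(p·σ²))) for p > 0, γ ≥ 0, and the leader payoff f(p) = R(p, 0) if 0 < p ≤ p_th and f(p) = R(p, Γ) if p_th < p ≤ P. Then f(p_th) = f(P), f(p) < f(p_th) for every p ∈ (0, P] with p ∉ {p_th, P}, and hence the maximizers of f over (0, P] are exactly the two points p_th and P. -/

import Mathlib

/-!
Writing `s = pσ²` and `c = 1 + γσ_J²`, the argument of `R` is `1 + x²/(2x + 1)` at the effective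
SNR `x = s/c`, and `x ↦ x²/(2x + 1)` is strictly increasing on `x ≥ 0`. Against the
best-responding jammer the effective SNR is `pσ²` for `p ≤ p_th` and `pσ²/(1 + Γσ_J²)` beyond,
so it climbs to `p_thσ²` on `(0, p_th]`, drops, and climbs again to exactly `p_thσ²` at `p = P`
because `P = p_th(1 + Γσ_J²)`.
-/

open Real Set

theorem div_two_mul_add_sq_div (s c : ℝ) :
    s / (2 * c + c ^ 2 / s) = (s / c) ^ 2 / (2 * (s / c) + 1) := by
  rcases eq_or_ne s 0 with rfl | hs
  · simp
  rcases eq_or_ne c 0 with rfl | hc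
  · simp
  have h₁ : 2 * c + c ^ 2 / s = c * (2 * s + c) / s := by field_simp
  have h₂ : 2 * (s / c) + 1 = (2 * s + c) / c := by field_simp
  rw [h₁, h₂]
  rcases eq_or_ne (2 * s + c) 0 with h | h
  · simp [h]
  field_simp

theorem strictMonoOn_sq_div_two_mul_add_one :
    StrictMonoOn (fun x : ℝ => x ^ 2 / (2 * x + 1)) (Ici 0) := by
  intro x (hx : 0 ≤ x) y (hy : 0 ≤ y) hxy
  rw [div_lt_div_iff₀ (by positivity) (by positivity)]
  nlinarith [mul_pos (sub_pos.2 hxy) (show 0 < y + x + 2 * x * y by nlinarith)]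

noncomputable def rateOfSNR (x : ℝ) : ℝ := logb 2 (1 + x ^ 2 / (2 * x + 1))

theorem strictMonoOn_rateOfSNR : StrictMonoOn rateOfSNR (Ici 0) := fun x hx y hy hxy =>
  logb_lt_logb one_lt_two (by have : (0 : ℝ) ≤ x := hx; positivity)
    ((add_lt_add_iff_left 1).2 (strictMonoOn_sq_div_two_mul_add_one hx hy hxy))

theorem setOf_forall_le_eq_pair {α β : Type*} [LinearOrder β] {f : α → β} {S : Set α}
    {a b : α} (ha : a ∈ S) (hb : b ∈ S) (hab : f a = f b)
    (hlt : ∀ p ∈ S, p ≠ a → p ≠ b → f p < f a) :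
    {p ∈ S | ∀ q ∈ S, f q ≤ f p} = {a, b} := by
  have hmax : ∀ q ∈ S, f q ≤ f a := fun q hq => by
    by_cases hqa : q = a
    · rw [hqa]
    by_cases hqb : q = b
    · rw [hqb, hab]
    exact (hlt q hq hqa hqb).le
  ext p
  refine ⟨fun ⟨hp, hpmax⟩ => ?_, ?_⟩
  · by_contra hne
    simp only [mem_insert_iff, mem_singleton_iff, not_or] at hne
    exact (hlt p hp hne.1 hne.2).not_ge (hpmax a ha)
  · rintro (rfl | rfl)
    exacts [⟨ha, hmax⟩, ⟨hb, hab ▸ hmax⟩]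

/-- The jammer's best response (Lemma 2) to the pilot power `p`. -/
noncomputable def jammerPower (pth Γ p : ℝ) : ℝ := if p ≤ pth then 0 else Γ

section Jammer

variable {a b Γ pth p : ℝ}

theorem jammerPower_of_le (h : p ≤ pth) : jammerPower pth Γ p = 0 := if_pos h

theorem jammerPower_of_lt (h : pth < p) : jammerPower pth Γ p = Γ := if_neg h.not_ge

theorem one_add_jammerPower_mul_pos (hΓb : 0 < 1 + Γ * b) (p : ℝ) :
    0 < 1 + jammerPower pth Γ p * b := by
  unfold jammerPower
  split_ifs <;> simp [hΓb]

theorem mul_div_one_add_jammerPower_lt (ha : 0 < a) (hΓb : 0 < 1 + Γ * b)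
    (hp : p < pth * (1 + Γ * b)) (hpth : p ≠ pth) :
    p * a / (1 + jammerPower pth Γ p * b) < pth * a := by
  rcases hpth.lt_or_gt with hlt | hgt
  · rw [jammerPower_of_le hlt.le, zero_mul, add_zero, div_one]
    exact mul_lt_mul_of_pos_right hlt ha
  · rw [jammerPower_of_lt hgt, div_lt_iff₀ hΓb]
    nlinarith

end Jammer

theorem stackelberg_two_equilibria_general
    (σ σJ Γ pth P : ℝ) (hσ : 0 < σ) (hΓ : 0 < Γ) (hpth : 0 < pth)
    (hPpth : pth < P) (hcrit : P = pth * (σJ ^ 2 * Γ + 1))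
    (R : ℝ → ℝ → ℝ)
    (hR : ∀ p γ, R p γ = Real.logb 2
      (1 + p * σ ^ 2 / (2 * (1 + γ * σJ ^ 2) + (1 + γ * σJ ^ 2) ^ 2 / (p * σ ^ 2))))
    (f : ℝ → ℝ) (hf : ∀ p, f p = if p ≤ pth then R p 0 else R p Γ) :
    f pth = f P ∧
    (∀ p ∈ Set.Ioc (0 : ℝ) P, p ≠ pth → p ≠ P → f p < f pth) ∧
    {p ∈ Set.Ioc (0 : ℝ) P | ∀ q ∈ Set.Ioc (0 : ℝ) P, f q ≤ f p} = {pth, P} := by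
  have hf_rate : ∀ p, f p = rateOfSNR (p * σ ^ 2 / (1 + jammerPower pth Γ p * σJ ^ 2)) := by
    intro p
    rw [hf, jammerPower, apply_ite (fun γ => rateOfSNR (p * σ ^ 2 / (1 + γ * σJ ^ 2))),
      hR, hR, rateOfSNR, rateOfSNR, div_two_mul_add_sq_div, div_two_mul_add_sq_div]
  have hΓb : 0 < 1 + Γ * σJ ^ 2 := by positivity
  have hP : P = pth * (1 + Γ * σJ ^ 2) := by rw [hcrit]; ring
  have hsnr_nonneg : ∀ p ∈ Ioc 0 P, 0 ≤ p * σ ^ 2 / (1 + jammerPower pth Γ p * σJ ^ 2) :=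
    fun p hp => (div_pos (by have := hp.1; positivity) (one_add_jammerPower_mul_pos hΓb p)).le
  have hsnr_pth : pth * σ ^ 2 / (1 + jammerPower pth Γ pth * σJ ^ 2) = pth * σ ^ 2 := by
    rw [jammerPower_of_le le_rfl, zero_mul, add_zero, div_one]
  have hsnr_P : P * σ ^ 2 / (1 + jammerPower pth Γ P * σJ ^ 2) = pth * σ ^ 2 := by
    rw [jammerPower_of_lt hPpth, hP]; field_simp
  have hpth_mem : pth ∈ Ioc 0 P := ⟨hpth, hPpth.le⟩
  have heq : f pth = f P := by rw [hf_rate, hf_rate, hsnr_pth, hsnr_P]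
  have hlt : ∀ p ∈ Ioc 0 P, p ≠ pth → p ≠ P → f p < f pth := fun p hp hne hneP => by
    rw [hf_rate, hf_rate]
    refine strictMonoOn_rateOfSNR (hsnr_nonneg p hp) (hsnr_nonneg pth hpth_mem) ?_
    rw [hsnr_pth]
    exact mul_div_one_add_jammerPower_lt (by positivity) hΓb (hP ▸ hp.2.lt_of_ne hneP) hne
  exact ⟨heq, hlt, setOf_forall_le_eq_pair hpth_mem ⟨hpth.trans hPpth, le_rfl⟩ heq hlt⟩

/-- The boundary case `P = p_th(σ_J²Γ + 1)` of Theorem 1, with two Stackelberg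
equilibria: the leader payoff `f(p) = R(p,0)` for `p ≤ p_th` and `f(p) = R(p,Γ)` for
`p > p_th` satisfies `f(p_th) = f(P)`, every other point of `(0, P]` gives a strictly
smaller payoff, and the set of maximizers of `f` over `(0, P]` is exactly `{p_th, P}`. -/
theorem stackelberg_two_equilibria
    (σ σJ Γ pth P : ℝ) (hσ : 0 < σ) (hσJ : 0 < σJ) (hΓ : 0 < Γ) (hpth : 0 < pth)
    (hPpth : pth < P) (hcrit : P = pth * (σJ ^ 2 * Γ + 1))
    (R : ℝ → ℝ → ℝ)
    (hR : ∀ p γ, R p γ = Real.logb 2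
      (1 + p * σ ^ 2 / (2 * (1 + γ * σJ ^ 2) + (1 + γ * σJ ^ 2) ^ 2 / (p * σ ^ 2))))
    (f : ℝ → ℝ) (hf : ∀ p, f p = if p ≤ pth then R p 0 else R p Γ) :
    f pth = f P ∧
    (∀ p ∈ Set.Ioc (0 : ℝ) P, p ≠ pth → p ≠ P → f p < f pth) ∧
    {p ∈ Set.Ioc (0 : ℝ) P | ∀ q ∈ Set.Ioc (0 : ℝ) P, f q ≤ f p} = {pth, P} :=
  stackelberg_two_equilibria_general σ σJ Γ pth P hσ hΓ hpth hPpth hcrit R hR f hf
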